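/- arXiv:1610.07781 — 5 statements merged into one kernel-verified Lean document; each statement's English description precedes it below -/
import Mathlib

section
/- Let V = ℂ^{n|n} and let ε_1 = ε ⊗ Id and ε_2 = Id ⊗ ε be the operators on V^{⊗3} obtained from ε(e_a ⊗ e_b) = δ_{a,\bar b} Σ_{i∈I} (−1)^{|e_i|} e_i ⊗ e_{\bar i}. Then ε_1 ε_2 ε_1 = −ε_1 and ε_2 ε_1 ε_2 = −ε_2. -/
/-! `V = ℂ^{n|n}` with basis indexed by `Idx n = Fin n ⊕ Fin n`
(`Sum.inl` = even indices, `Sum.inr` = odd); tensor powers of `V` are realized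
as coordinate functions. -/

abbrev Idx (n : ℕ) := Fin n ⊕ Fin n

/-- The bar involution `i ↦ ī`. -/
def bar {n : ℕ} : Idx n → Idx n := Sum.swap

/-- Parity: `false` (even) on `1,…,n`, `true` (odd) on `1̄,…,n̄`. -/
def pIdx {n : ℕ} : Idx n → Bool := Sum.elim (fun _ => false) (fun _ => true)

/-- The sign `(−1)^{|e_i|}`. -/
def sgn {n : ℕ} (i : Idx n) : ℂ := if pIdx i then -1 else 1

/-- The sign `(−1)^{|e_a||e_b|}`. -/
def sSign {n : ℕ} (a b : Idx n) : ℂ := if pIdx a && pIdx b then -1 else 1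

/-- `V ⊗ V` in coordinates. -/
abbrev VV (n : ℕ) := Idx n × Idx n → ℂ

/-- `ε(e_a ⊗ e_b) = δ_{a,b̄} ∑_{i∈I} (−1)^{|e_i|} e_i ⊗ e_{ī}`. -/
noncomputable def epsOp (n : ℕ) : VV n →ₗ[ℂ] VV n :=
  LinearMap.pi fun p =>
    (if p.2 = bar p.1 then sgn p.1 else 0) • ∑ a : Idx n, LinearMap.proj (a, bar a)

/-- The super-permutation `s(e_a ⊗ e_b) = (−1)^{|e_a||e_b|} e_b ⊗ e_a`. -/
noncomputable def sOp (n : ℕ) : VV n →ₗ[ℂ] VV n :=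
  LinearMap.pi fun p => sSign p.1 p.2 • LinearMap.proj (p.2, p.1)

/-- `V ⊗ V ⊗ V` in coordinates. -/
abbrev VVV (n : ℕ) := Idx n × Idx n × Idx n → ℂ

/-- `ε₁ = ε ⊗ Id` on `V^{⊗3}`. -/
noncomputable def eps1 (n : ℕ) : VVV n →ₗ[ℂ] VVV n :=
  LinearMap.pi fun p =>
    (if p.2.1 = bar p.1 then sgn p.1 else 0) • ∑ k : Idx n, LinearMap.proj (k, bar k, p.2.2)

/-- `ε₂ = Id ⊗ ε` on `V^{⊗3}`. -/
noncomputable def eps2 (n : ℕ) : VVV n →ₗ[ℂ] VVV n :=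
  LinearMap.pi fun p =>
    (if p.2.2 = bar p.2.1 then sgn p.2.1 else 0) • ∑ k : Idx n, LinearMap.proj (p.1, k, bar k)

/-- `s₁ = s ⊗ Id` on `V^{⊗3}`. -/
noncomputable def sOp1 (n : ℕ) : VVV n →ₗ[ℂ] VVV n :=
  LinearMap.pi fun p => sSign p.1 p.2.1 • LinearMap.proj (p.2.1, p.1, p.2.2)

/-- `s₂ = Id ⊗ s` on `V^{⊗3}`. -/
noncomputable def sOp2 (n : ℕ) : VVV n →ₗ[ℂ] VVV n :=
  LinearMap.pi fun p => sSign p.2.1 p.2.2 • LinearMap.proj (p.1, p.2.2, p.2.1)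

@[simp] lemma bar_bar {n : ℕ} (i : Idx n) : bar (bar i) = i := Sum.swap_swap i

@[simp] lemma sgn_bar_mul {n : ℕ} (i : Idx n) : sgn (bar i) * sgn i = -1 := by
  cases i <;> simp [sgn, bar, pIdx]

@[simp] lemma sgn_mul_bar {n : ℕ} (i : Idx n) : sgn i * sgn (bar i) = -1 := by
  rw [mul_comm]; exact sgn_bar_mul i

lemma eps1_apply {n : ℕ} (f : VVV n) (p : Idx n × Idx n × Idx n) :
    eps1 n f p = (if p.2.1 = bar p.1 then sgn p.1 else 0) * ∑ k : Idx n, f (k, bar k, p.2.2) := by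
  simp only [eps1, LinearMap.pi_apply]
  split_ifs <;> simp [Finset.mul_sum, mul_add]

lemma eps2_apply {n : ℕ} (f : VVV n) (p : Idx n × Idx n × Idx n) :
    eps2 n f p = (if p.2.2 = bar p.2.1 then sgn p.2.1 else 0) * ∑ k : Idx n, f (p.1, k, bar k) := by
  simp only [eps2, LinearMap.pi_apply]
  split_ifs <;> simp [Finset.mul_sum, mul_add]


/-- relation (P.6)(d) in the tensor representation:
`ε₁ ε₂ ε₁ = −ε₁` and `ε₂ ε₁ ε₂ = −ε₂`. -/
theorem eps1_eps2_eps1 (n : ℕ) :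
    (eps1 n) ∘ₗ (eps2 n) ∘ₗ (eps1 n) = -(eps1 n) ∧
    (eps2 n) ∘ₗ (eps1 n) ∘ₗ (eps2 n) = -(eps2 n) := by
  constructor
  · apply LinearMap.ext; intro f; funext p
    obtain ⟨a, b, c⟩ := p
    simp only [LinearMap.comp_apply, LinearMap.neg_apply, Pi.neg_apply]
    have h1 : ∀ k : Idx n, eps2 n (eps1 n f) (k, bar k, c)
        = if c = k then sgn (bar k) * (sgn k * ∑ m : Idx n, f (m, bar m, c)) else 0 := by
      intro k
      rw [eps2_apply]
      simp only [bar_bar]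
      split_ifs with h
      · subst h
        congr 1
        have h2 : ∀ j : Idx n, eps1 n f (c, j, bar j)
            = if j = bar c then sgn c * ∑ m : Idx n, f (m, bar m, bar j) else 0 := by
          intro j; rw [eps1_apply]; split_ifs <;> simp
        rw [Finset.sum_congr rfl fun j _ => h2 j, Finset.sum_ite_eq' Finset.univ (bar c)]
        simp
      · simp
    rw [eps1_apply, eps1_apply, Finset.sum_congr rfl fun k _ => h1 k,
      Finset.sum_ite_eq Finset.univ c]
    simp only [Finset.mem_univ, if_true, ← mul_assoc, sgn_bar_mul]
    ring
  · apply LinearMap.ext; intro f; funext p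
    obtain ⟨a, b, c⟩ := p
    simp only [LinearMap.comp_apply, LinearMap.neg_apply, Pi.neg_apply]
    have h1 : ∀ k : Idx n, eps1 n (eps2 n f) (a, k, bar k)
        = if k = bar a then sgn a * (sgn (bar a) * ∑ j : Idx n, f (a, j, bar j)) else 0 := by
      intro k
      rw [eps1_apply]
      dsimp only
      split_ifs with h
      · subst h
        simp only [bar_bar]
        congr 1
        have h2 : ∀ m : Idx n, eps2 n f (m, bar m, a)
            = if a = m then sgn (bar m) * ∑ j : Idx n, f (m, j, bar j) else 0 := by
          intro m; rw [eps2_apply]; simp only [bar_bar]; split_ifs with hm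
          · subst hm; rfl
          · simp
        rw [Finset.sum_congr rfl fun m _ => h2 m, Finset.sum_ite_eq Finset.univ a]
        simp
      · simp
    rw [eps2_apply, eps2_apply, Finset.sum_congr rfl fun k _ => h1 k,
      Finset.sum_ite_eq' Finset.univ (bar a)]
    simp only [Finset.mem_univ, if_true, ← mul_assoc, sgn_mul_bar]
    ring
end

section
/- Let g = p(n) ⊂ gl(n|n) be the periplectic Lie superalgebra, with homogeneous basis {x_i} of g and dual basis {x_i*} of the complement g* ⊂ gl(n|n) with respect to the supertrace form (Str(x_i* x_j) = δ_{ij}). Then the element C = Σ_i x_i ⊗ x_i* acts on M ⊗ V as a g-module endomorphism for every g-module M, where V = ℂ^{n|n} is the standard gl(n|n)-module; that is, C commutes with the action of every element of g. -/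
open Sum Matrix

open scoped TensorProduct

/-- The sign `(−1)^{|e_i|}`. -/
def sgnC {n : ℕ} (i : Idx n) : ℂ := if pIdx i then -1 else 1

/-- Membership in `p(n) = {[[A,U],[L,−Aᵗ]] : U symmetric, L skew} ⊂ gl(n|n)`. -/
def IsPn {n : ℕ} (X : Matrix (Idx n) (Idx n) ℂ) : Prop :=
  (∀ s t, X (inr s) (inr t) = -X (inl t) (inl s)) ∧
  (∀ s t, X (inl s) (inr t) = X (inl t) (inr s)) ∧
  (∀ s t, X (inr s) (inl t) = -X (inr t) (inl s))

/-- Membership in the complement `g* = {[[A,J],[K,Aᵗ]] : J skew, K symmetric}`,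
so that `gl(n|n) = g ⊕ g*`. -/
def IsGstar {n : ℕ} (X : Matrix (Idx n) (Idx n) ℂ) : Prop :=
  (∀ s t, X (inr s) (inr t) = X (inl t) (inl s)) ∧
  (∀ s t, X (inl s) (inr t) = -X (inl t) (inr s)) ∧
  (∀ s t, X (inr s) (inl t) = X (inr t) (inl s))

/-- `X` is homogeneous of parity `px` (`false` = even, `true` = odd). -/
def IsHomog {n : ℕ} (X : Matrix (Idx n) (Idx n) ℂ) (px : Bool) : Prop :=
  ∀ a b, X a b ≠ 0 → Bool.xor (pIdx a) (pIdx b) = px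

/-- The supertrace `Str(X) = tr A − tr D`. -/
noncomputable def superStr {n : ℕ} (X : Matrix (Idx n) (Idx n) ℂ) : ℂ :=
  ∑ a : Idx n, sgnC a * X a a

/-- The even part of a matrix (diagonal blocks). -/
def evenPart {n : ℕ} (X : Matrix (Idx n) (Idx n) ℂ) : Matrix (Idx n) (Idx n) ℂ :=
  Matrix.of fun a b => if pIdx a = pIdx b then X a b else 0

/-- The odd part of a matrix (off-diagonal blocks). -/
def oddPart {n : ℕ} (X : Matrix (Idx n) (Idx n) ℂ) : Matrix (Idx n) (Idx n) ℂ :=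
  X - evenPart X

/-- The sign `(−1)^{|x||y|}` for parities `px, py`. -/
def bSign (px py : Bool) : ℂ := if px && py then -1 else 1

/-! ### auxiliary lemmas -/

lemma bSign_sq (px py : Bool) : bSign px py * bSign px py = 1 := by
  cases px <;> cases py <;> norm_num [bSign]

lemma bSign_comm (px py : Bool) : bSign px py = bSign py px := by
  cases px <;> cases py <;> norm_num [bSign]

lemma superStr_add {n : ℕ} (A B : Matrix (Idx n) (Idx n) ℂ) :
    superStr (A + B) = superStr A + superStr B := by
  simp [superStr, mul_add, Finset.sum_add_distrib]

lemma superStr_sub {n : ℕ} (A B : Matrix (Idx n) (Idx n) ℂ) :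
    superStr (A - B) = superStr A - superStr B := by
  simp [superStr, mul_sub, Finset.sum_sub_distrib]

lemma superStr_smul {n : ℕ} (c : ℂ) (A : Matrix (Idx n) (Idx n) ℂ) :
    superStr (c • A) = c * superStr A := by
  rw [superStr, superStr, Finset.mul_sum]
  refine Finset.sum_congr rfl fun a _ => ?_
  simp [Matrix.smul_apply]; ring

lemma superStr_sum {n : ℕ} {ι : Type*} (s : Finset ι) (f : ι → Matrix (Idx n) (Idx n) ℂ) :
    superStr (∑ i ∈ s, f i) = ∑ i ∈ s, superStr (f i) := by
  classical
  induction s using Finset.induction_on with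
  | empty => simp [superStr]
  | insert _ _ h ih => rw [Finset.sum_insert h, superStr_add, ih, Finset.sum_insert h]

lemma superStr_odd {n : ℕ} (A : Matrix (Idx n) (Idx n) ℂ) (h : IsHomog A true) :
    superStr A = 0 := by
  apply Finset.sum_eq_zero
  intro a _
  rcases eq_or_ne (A a a) 0 with h0 | h0
  · simp [h0]
  · have := h a a h0
    simp at this

lemma IsHomog.mul {n : ℕ} {A B : Matrix (Idx n) (Idx n) ℂ} {pa pb : Bool}
    (hA : IsHomog A pa) (hB : IsHomog B pb) : IsHomog (A * B) (Bool.xor pa pb) := by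
  intro a b h0
  rw [Matrix.mul_apply] at h0
  obtain ⟨c, -, hc⟩ := Finset.exists_ne_zero_of_sum_ne_zero h0
  have h1 := hA a c (left_ne_zero_of_mul hc)
  have h2 := hB c b (right_ne_zero_of_mul hc)
  subst h1 h2
  cases pIdx a <;> cases pIdx b <;> cases pIdx c <;> rfl

lemma IsHomog.sub {n : ℕ} {A B : Matrix (Idx n) (Idx n) ℂ} {pa : Bool}
    (hA : IsHomog A pa) (hB : IsHomog B pa) : IsHomog (A - B) pa := by
  intro a b h0
  rcases eq_or_ne (A a b) 0 with h1 | h1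
  · exact hB a b (by simpa [Matrix.sub_apply, h1] using h0)
  · exact hA a b h1

lemma IsHomog.smul {n : ℕ} {A : Matrix (Idx n) (Idx n) ℂ} {pa : Bool} (c : ℂ)
    (hA : IsHomog A pa) : IsHomog (c • A) pa := by
  intro a b h0
  exact hA a b (right_ne_zero_of_mul (by simpa [Matrix.smul_apply] using h0))

/-- supertrace supersymmetry for homogeneous matrices -/
lemma superStr_mul_comm {n : ℕ} {A B : Matrix (Idx n) (Idx n) ℂ} {pa pb : Bool}
    (hA : IsHomog A pa) (hB : IsHomog B pb) :
    superStr (A * B) = bSign pa pb * superStr (B * A) := by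
  have key : ∀ a b : Idx n, sgnC a * (A a b * B b a) = bSign pa pb * (sgnC b * (B b a * A a b)) := by
    intro a b
    rcases eq_or_ne (A a b) 0 with h1 | h1
    · simp [h1]
    rcases eq_or_ne (B b a) 0 with h2 | h2
    · simp [h2]
    have e1 := hA a b h1
    have e2 := hB b a h2
    subst e1 e2
    cases hpa : pIdx a <;> cases hpb : pIdx b <;>
      simp only [hpa, hpb, sgnC, bSign] <;> norm_num <;> ring
  have L : superStr (A * B) = ∑ a : Idx n, ∑ b : Idx n, sgnC a * (A a b * B b a) := by
    rw [superStr]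
    simp only [Matrix.mul_apply, Finset.mul_sum]
  have R : superStr (B * A) = ∑ a : Idx n, ∑ b : Idx n, sgnC b * (B b a * A a b) := by
    rw [superStr]
    simp only [Matrix.mul_apply, Finset.mul_sum]
    rw [Finset.sum_comm]
  rw [L, R, Finset.mul_sum]
  refine Finset.sum_congr rfl fun a _ => ?_
  rw [Finset.mul_sum]
  exact Finset.sum_congr rfl fun b _ => key a b

/-! ### supertranspose and the form matrix β -/

def sgn2 {n : ℕ} (a b : Idx n) : ℂ := if pIdx a && !pIdx b then -1 else 1

lemma sgn2_ll {n : ℕ} (s t : Fin n) : sgn2 (n := n) (inl s) (inl t) = 1 := by simp [sgn2, pIdx]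
lemma sgn2_lr {n : ℕ} (s t : Fin n) : sgn2 (n := n) (inl s) (inr t) = 1 := by simp [sgn2, pIdx]
lemma sgn2_rl {n : ℕ} (s t : Fin n) : sgn2 (n := n) (inr s) (inl t) = -1 := by simp [sgn2, pIdx]
lemma sgn2_rr {n : ℕ} (s t : Fin n) : sgn2 (n := n) (inr s) (inr t) = 1 := by simp [sgn2, pIdx]

def stp {n : ℕ} (X : Matrix (Idx n) (Idx n) ℂ) : Matrix (Idx n) (Idx n) ℂ :=
  Matrix.of fun a b => sgn2 a b * X b a

def betaM (n : ℕ) : Matrix (Idx n) (Idx n) ℂ :=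
  Matrix.of fun a b => if a = Sum.swap b then 1 else 0

lemma mySwap_eq_iff {n : ℕ} {a b : Idx n} : a = Sum.swap b ↔ Sum.swap a = b :=
  ⟨fun h => by rw [h, Sum.swap_swap], fun h => by rw [← h, Sum.swap_swap]⟩

lemma betaM_mul_apply {n : ℕ} (X : Matrix (Idx n) (Idx n) ℂ) (a b : Idx n) :
    (betaM n * X) a b = X (Sum.swap a) b := by
  rw [Matrix.mul_apply]
  simp only [betaM, Matrix.of_apply, ite_mul, one_mul, zero_mul]
  have : ∀ c : Idx n, (a = Sum.swap c) = (Sum.swap a = c) := fun c => propext mySwap_eq_iff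
  simp_rw [this]
  rw [Finset.sum_ite_eq Finset.univ (Sum.swap a) (fun c => X c b)]
  simp

lemma mul_betaM_apply {n : ℕ} (X : Matrix (Idx n) (Idx n) ℂ) (a b : Idx n) :
    (X * betaM n) a b = X a (Sum.swap b) := by
  rw [Matrix.mul_apply]
  simp only [betaM, Matrix.of_apply, mul_ite, mul_one, mul_zero]
  rw [Finset.sum_ite_eq' Finset.univ (Sum.swap b) (X a)]
  simp

lemma stp_sub {n : ℕ} (A B : Matrix (Idx n) (Idx n) ℂ) : stp (A - B) = stp A - stp B := by
  ext a b; simp [stp, mul_sub]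

lemma stp_smul {n : ℕ} (c : ℂ) (A : Matrix (Idx n) (Idx n) ℂ) : stp (c • A) = c • stp A := by
  ext a b; simp [stp]; ring

lemma stp_mul {n : ℕ} {A B : Matrix (Idx n) (Idx n) ℂ} {pa pb : Bool}
    (hA : IsHomog A pa) (hB : IsHomog B pb) :
    stp (A * B) = bSign pa pb • (stp B * stp A) := by
  ext a b
  simp only [stp, Matrix.of_apply, Matrix.smul_apply, Matrix.mul_apply, Finset.mul_sum,
    smul_eq_mul]
  refine Finset.sum_congr rfl fun c _ => ?_
  rcases eq_or_ne (A b c) 0 with h1 | h1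
  · simp [h1]
  rcases eq_or_ne (B c a) 0 with h2 | h2
  · simp [h2]
  have e1 := hA b c h1
  have e2 := hB c a h2
  subst e1 e2
  cases hpa : pIdx a <;> cases hpb : pIdx b <;> cases hpc : pIdx c <;>
    simp only [sgn2, bSign, hpa, hpb, hpc] <;> norm_num <;> ring

lemma isPn_iff {n : ℕ} {X : Matrix (Idx n) (Idx n) ℂ} :
    IsPn X ↔ ∀ a b : Idx n, X (Sum.swap a) b = -(sgn2 a (Sum.swap b) * X (Sum.swap b) a) := by
  constructor
  · rintro ⟨h1, h2, h3⟩ a b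
    rcases a with s | s <;> rcases b with t | t <;>
      simp only [Sum.swap_inl, Sum.swap_inr, sgn2_ll, sgn2_lr, sgn2_rl, sgn2_rr]
    · rw [one_mul]; exact h3 s t
    · rw [one_mul]; exact h1 s t
    · rw [one_mul, h1 t s, neg_neg]
    · rw [h2 s t]; ring
  · intro h
    refine ⟨fun s t => ?_, fun s t => ?_, fun s t => ?_⟩
    · have := h (inl s) (inr t)
      rw [Sum.swap_inl, Sum.swap_inr, sgn2_ll, one_mul] at this
      exact this
    · have := h (inr s) (inr t)
      rw [Sum.swap_inr, Sum.swap_inr, sgn2_rl] at this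
      rw [this]; ring
    · have := h (inl s) (inl t)
      rw [Sum.swap_inl, Sum.swap_inl, sgn2_lr, one_mul] at this
      exact this

lemma isGstar_iff {n : ℕ} {X : Matrix (Idx n) (Idx n) ℂ} :
    IsGstar X ↔ ∀ a b : Idx n, X (Sum.swap a) b = sgn2 a (Sum.swap b) * X (Sum.swap b) a := by
  constructor
  · rintro ⟨h1, h2, h3⟩ a b
    rcases a with s | s <;> rcases b with t | t <;>
      simp only [Sum.swap_inl, Sum.swap_inr, sgn2_ll, sgn2_lr, sgn2_rl, sgn2_rr]
    · rw [one_mul]; exact h3 s t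
    · rw [one_mul]; exact h1 s t
    · rw [one_mul, h1 t s]
    · rw [h2 s t]; ring
  · intro h
    refine ⟨fun s t => ?_, fun s t => ?_, fun s t => ?_⟩
    · have := h (inl s) (inr t)
      rw [Sum.swap_inl, Sum.swap_inr, sgn2_ll, one_mul] at this
      exact this
    · have := h (inr s) (inr t)
      rw [Sum.swap_inr, Sum.swap_inr, sgn2_rl] at this
      rw [this]; ring
    · have := h (inl s) (inl t)
      rw [Sum.swap_inl, Sum.swap_inl, sgn2_lr, one_mul] at this
      exact this

lemma isPn_beta {n : ℕ} {X : Matrix (Idx n) (Idx n) ℂ} :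
    IsPn X ↔ betaM n * X = -(stp X * betaM n) := by
  rw [isPn_iff]
  constructor
  · intro h
    ext a b
    rw [betaM_mul_apply, Matrix.neg_apply, mul_betaM_apply]
    exact h a b
  · intro h a b
    have := congrFun (congrFun h a) b
    rw [betaM_mul_apply] at this
    rw [this, Matrix.neg_apply, mul_betaM_apply]
    rfl

lemma isGstar_beta {n : ℕ} {X : Matrix (Idx n) (Idx n) ℂ} :
    IsGstar X ↔ betaM n * X = stp X * betaM n := by
  rw [isGstar_iff]
  constructor
  · intro h
    ext a b
    rw [betaM_mul_apply, mul_betaM_apply]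
    exact h a b
  · intro h a b
    have := congrFun (congrFun h a) b
    rw [betaM_mul_apply] at this
    rw [this, mul_betaM_apply]
    rfl

/-! ### bracket closure -/

lemma isPn_bracket {n : ℕ} {x y : Matrix (Idx n) (Idx n) ℂ} {px py : Bool}
    (hx : IsPn x) (hy : IsPn y) (hhx : IsHomog x px) (hhy : IsHomog y py) :
    IsPn (x * y - bSign px py • (y * x)) := by
  rw [isPn_beta] at hx hy ⊢
  have R : stp (x * y - bSign px py • (y * x))
      = bSign px py • (stp y * stp x) - stp x * stp y := by
    rw [stp_sub, stp_smul, stp_mul hhx hhy, stp_mul hhy hhx, bSign_comm py px,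
      smul_smul, bSign_sq, one_smul]
  have Hx : ∀ z, betaM n * (x * z) = -(stp x * (betaM n * z)) := fun z => by
    rw [← mul_assoc, hx, neg_mul, mul_assoc]
  have Hy : ∀ z, betaM n * (y * z) = -(stp y * (betaM n * z)) := fun z => by
    rw [← mul_assoc, hy, neg_mul, mul_assoc]
  rw [R, mul_sub, mul_smul_comm, Hx, Hy, hy, hx]
  simp only [mul_neg, neg_neg, smul_neg]
  rw [sub_mul, smul_mul_assoc, neg_sub, mul_assoc, mul_assoc]

lemma isGstar_bracket {n : ℕ} {x y : Matrix (Idx n) (Idx n) ℂ} {px py : Bool}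
    (hx : IsPn x) (hy : IsGstar y) (hhx : IsHomog x px) (hhy : IsHomog y py) :
    IsGstar (x * y - bSign px py • (y * x)) := by
  rw [isPn_beta] at hx
  rw [isGstar_beta] at hy ⊢
  have R : stp (x * y - bSign px py • (y * x))
      = bSign px py • (stp y * stp x) - stp x * stp y := by
    rw [stp_sub, stp_smul, stp_mul hhx hhy, stp_mul hhy hhx, bSign_comm py px,
      smul_smul, bSign_sq, one_smul]
  have Hx : ∀ z, betaM n * (x * z) = -(stp x * (betaM n * z)) := fun z => by
    rw [← mul_assoc, hx, neg_mul, mul_assoc]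
  have Hy : ∀ z, betaM n * (y * z) = stp y * (betaM n * z) := fun z => by
    rw [← mul_assoc, hy, mul_assoc]
  rw [R, mul_sub, mul_smul_comm, Hx, Hy, hy, hx]
  simp only [mul_neg, smul_neg, sub_neg_eq_add]
  rw [sub_mul, smul_mul_assoc, mul_assoc, mul_assoc]
  abel

/-! ### even/odd parts -/

lemma evenPart_apply {n : ℕ} (X : Matrix (Idx n) (Idx n) ℂ) (a b : Idx n) :
    evenPart X a b = if pIdx a = pIdx b then X a b else 0 := rfl

lemma oddPart_apply {n : ℕ} (X : Matrix (Idx n) (Idx n) ℂ) (a b : Idx n) :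
    oddPart X a b = if pIdx a = pIdx b then 0 else X a b := by
  simp only [oddPart, Matrix.sub_apply, evenPart_apply]
  split <;> simp

lemma isPn_evenPart {n : ℕ} {X : Matrix (Idx n) (Idx n) ℂ} (h : IsPn X) :
    IsPn (evenPart X) := by
  obtain ⟨h1, h2, h3⟩ := h
  refine ⟨fun s t => ?_, fun s t => ?_, fun s t => ?_⟩ <;>
    simp [evenPart_apply, pIdx, h1 s t]

lemma isPn_oddPart {n : ℕ} {X : Matrix (Idx n) (Idx n) ℂ} (h : IsPn X) :
    IsPn (oddPart X) := by
  obtain ⟨h1, h2, h3⟩ := h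
  refine ⟨fun s t => ?_, fun s t => ?_, fun s t => ?_⟩ <;>
    simp [oddPart_apply, pIdx, h2 s t, h3 s t]

lemma isHomog_evenPart {n : ℕ} (X : Matrix (Idx n) (Idx n) ℂ) :
    IsHomog (evenPart X) false := by
  intro a b h0
  rw [evenPart_apply] at h0
  by_cases h : pIdx a = pIdx b
  · simp [h]
  · simp [h] at h0

lemma isHomog_oddPart {n : ℕ} (X : Matrix (Idx n) (Idx n) ℂ) :
    IsHomog (oddPart X) true := by
  intro a b h0
  rw [oddPart_apply] at h0
  by_cases h : pIdx a = pIdx b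
  · simp [h] at h0
  · cases hpa : pIdx a <;> cases hpb : pIdx b <;> simp_all

lemma evenPart_add_oddPart {n : ℕ} (X : Matrix (Idx n) (Idx n) ℂ) :
    evenPart X + oddPart X = X := by
  rw [oddPart]; abel

/-! ### dual basis expansion -/

lemma expand_pn {n : ℕ} {ι : Type*} [Fintype ι] [DecidableEq ι]
    (xb xs : ι → Matrix (Idx n) (Idx n) ℂ)
    (hdual : ∀ i j, superStr (xs i * xb j) = if i = j then 1 else 0)
    (y : Matrix (Idx n) (Idx n) ℂ) (hy : y ∈ Submodule.span ℂ (Set.range xb)) :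
    y = ∑ j, superStr (xs j * y) • xb j := by
  obtain ⟨a, rfl⟩ := (Submodule.mem_span_range_iff_exists_fun ℂ).1 hy
  have key : ∀ j, superStr (xs j * ∑ k, a k • xb k) = a j := by
    intro j
    rw [Finset.mul_sum, superStr_sum]
    have : ∀ k, superStr (xs j * (a k • xb k)) = a k * (if j = k then 1 else 0) := by
      intro k
      rw [Matrix.mul_smul, superStr_smul, hdual j k]
    simp_rw [this]
    simp
  simp_rw [key]

lemma expand_gstar {n : ℕ} {ι : Type*} [Fintype ι] [DecidableEq ι]
    (xb xs : ι → Matrix (Idx n) (Idx n) ℂ)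
    (hdual : ∀ i j, superStr (xs i * xb j) = if i = j then 1 else 0)
    (y : Matrix (Idx n) (Idx n) ℂ) (hy : y ∈ Submodule.span ℂ (Set.range xs)) :
    y = ∑ j, superStr (y * xb j) • xs j := by
  obtain ⟨a, rfl⟩ := (Submodule.mem_span_range_iff_exists_fun ℂ).1 hy
  have key : ∀ j, superStr ((∑ k, a k • xs k) * xb j) = a j := by
    intro j
    rw [Finset.sum_mul, superStr_sum]
    have : ∀ k, superStr ((a k • xs k) * xb j) = a k * (if k = j then 1 else 0) := by
      intro k
      rw [Matrix.smul_mul, superStr_smul, hdual k j]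
    simp_rw [this]
    simp
  simp_rw [key]

/-! ### tensor and mulVecLin helpers -/

section THelp

variable {M : Type*} [AddCommGroup M] [Module ℂ M] {n : ℕ}

lemma tmap_sum_left {ι : Type*} (t : Finset ι)
    (f : ι → Module.End ℂ M) (g : Module.End ℂ (Idx n → ℂ)) :
    TensorProduct.map (∑ i ∈ t, f i) g = ∑ i ∈ t, TensorProduct.map (f i) g := by
  classical
  induction t using Finset.induction_on with
  | empty => simp [TensorProduct.map_zero_left]
  | insert _ _ h ih =>
      rw [Finset.sum_insert h, TensorProduct.map_add_left, ih, Finset.sum_insert h]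

lemma tmap_sum_right {ι : Type*} (t : Finset ι)
    (f : Module.End ℂ M) (g : ι → Module.End ℂ (Idx n → ℂ)) :
    TensorProduct.map f (∑ i ∈ t, g i) = ∑ i ∈ t, TensorProduct.map f (g i) := by
  classical
  induction t using Finset.induction_on with
  | empty => simp [TensorProduct.map_zero_right]
  | insert _ _ h ih =>
      rw [Finset.sum_insert h, TensorProduct.map_add_right, ih, Finset.sum_insert h]

lemma tmap_sub_right (f : Module.End ℂ M) (g₁ g₂ : Module.End ℂ (Idx n → ℂ)) :
    TensorProduct.map f (g₁ - g₂) = TensorProduct.map f g₁ - TensorProduct.map f g₂ := by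
  rw [sub_eq_add_neg, TensorProduct.map_add_right, ← neg_one_smul ℂ g₂,
    TensorProduct.map_smul_right, neg_one_smul ℂ (TensorProduct.map f g₂), ← sub_eq_add_neg]

end THelp

lemma mlv_mul {n : ℕ} (P Q : Matrix (Idx n) (Idx n) ℂ) :
    Matrix.mulVecLin P * Matrix.mulVecLin Q = Matrix.mulVecLin (P * Q) := by
  rw [Matrix.mulVecLin_mul]; rfl

lemma mlv_sub {n : ℕ} (P Q : Matrix (Idx n) (Idx n) ℂ) :
    Matrix.mulVecLin (P - Q) = Matrix.mulVecLin P - Matrix.mulVecLin Q := by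
  ext v a; simp [Matrix.sub_mulVec]

lemma mlv_smul {n : ℕ} (c : ℂ) (P : Matrix (Idx n) (Idx n) ℂ) :
    Matrix.mulVecLin (c • P) = c • Matrix.mulVecLin P := by
  ext v a; simp [Matrix.smul_mulVec]

lemma mlv_sum {n : ℕ} {ι : Type*} (t : Finset ι) (f : ι → Matrix (Idx n) (Idx n) ℂ) :
    Matrix.mulVecLin (∑ i ∈ t, f i) = ∑ i ∈ t, Matrix.mulVecLin (f i) := by
  classical
  induction t using Finset.induction_on with
  | empty => simp
  | insert _ _ h ih => rw [Finset.sum_insert h, Matrix.mulVecLin_add, ih, Finset.sum_insert h]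

lemma xor_cancel_left' (a b : Bool) : Bool.xor a (Bool.xor a b) = b := by
  cases a <;> cases b <;> rfl

/-- Proposition 2.1, the Casimir-like element: let `{x_i}` be a
homogeneous basis of `g = p(n)` and `{x_i*}` the dual homogeneous basis of the
complement `g* ⊂ gl(n|n)` with respect to the supertrace form
(`Str(x_i* x_j) = δ_{ij}`).  Then for every `p(n)`-supermodule `(M, σ, ρ)` the
element `C = ∑_i x_i ⊗ x_i*`, acting on `M ⊗ V` by
`C(m ⊗ v) = ∑_i (−1)^{|x_i*||m|} x_i m ⊗ x_i* v`, commutes with the action of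
every element of `p(n)`; i.e. `C ∈ End_g(M ⊗ V)`. -/
theorem casimir_like_commutes {n : ℕ} {M : Type*} [AddCommGroup M] [Module ℂ M]
    -- the parity involution of the supermodule `M`
    (σ : Module.End ℂ M) (hσ : σ * σ = 1)
    -- the action of `gl(n|n)` restricted to `p(n)`
    (ρ : Matrix (Idx n) (Idx n) ℂ →ₗ[ℂ] Module.End ℂ M)
    -- super-representation axiom: `ρ[x,y] = ρx ρy − (−1)^{|x||y|} ρy ρx`
    (hrep : ∀ (x y : Matrix (Idx n) (Idx n) ℂ) (px py : Bool),
      IsPn x → IsPn y → IsHomog x px → IsHomog y py →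
      ρ (x * y - bSign px py • (y * x)) =
        ρ x * ρ y - bSign px py • (ρ y * ρ x))
    -- `ρ x` has parity `|x|`: it (anti)commutes with `σ` accordingly
    (hσρ : ∀ (x : Matrix (Idx n) (Idx n) ℂ) (px : Bool),
      IsPn x → IsHomog x px →
      ρ x * σ = (if px then (-1 : ℂ) else 1) • (σ * ρ x))
    -- homogeneous basis `{x_i}` of `g` and dual basis `{x_i*}` of `g*`
    {ι : Type*} [Fintype ι] [DecidableEq ι] (xb xs : ι → Matrix (Idx n) (Idx n) ℂ) (pb : ι → Bool)
    (hxb : ∀ i, IsPn (xb i)) (hxbh : ∀ i, IsHomog (xb i) (pb i))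
    (hxs : ∀ i, IsGstar (xs i)) (hxsh : ∀ i, IsHomog (xs i) (pb i))
    (hdual : ∀ i j, superStr (xs i * xb j) = if i = j then 1 else 0)
    (hspan : ∀ x, IsPn x → x ∈ Submodule.span ℂ (Set.range xb))
    (hspan' : ∀ x, IsGstar x → x ∈ Submodule.span ℂ (Set.range xs)) :
    -- the action of homogeneous `x` and of `C` on `M ⊗ V`
    ∀ x : Matrix (Idx n) (Idx n) ℂ, IsPn x →
      (TensorProduct.map (ρ x) LinearMap.id
        + TensorProduct.map LinearMap.id (Matrix.mulVecLin (evenPart x))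
        + TensorProduct.map σ (Matrix.mulVecLin (oddPart x))) ∘ₗ
      (∑ i, TensorProduct.map (ρ (xb i) * if pb i then σ else 1)
          (Matrix.mulVecLin (xs i))) =
      (∑ i, TensorProduct.map (ρ (xb i) * if pb i then σ else 1)
          (Matrix.mulVecLin (xs i))) ∘ₗ
      (TensorProduct.map (ρ x) LinearMap.id
        + TensorProduct.map LinearMap.id (Matrix.mulVecLin (evenPart x))
        + TensorProduct.map σ (Matrix.mulVecLin (oddPart x))) := by
  classical
  -- σ commutes with ρ z up to the sign (−1)^{|z|}
  have hσρ' : ∀ (z : Matrix (Idx n) (Idx n) ℂ) (pz : Bool), IsPn z → IsHomog z pz →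
      σ * ρ z = (if pz then (-1 : ℂ) else 1) • (ρ z * σ) := by
    intro z pz h1 h2
    have h := hσρ z pz h1 h2
    have hc : (if pz then (-1 : ℂ) else 1) * (if pz then (-1 : ℂ) else 1) = 1 := by
      cases pz <;> norm_num
    calc σ * ρ z
        = ((if pz then (-1 : ℂ) else 1) * (if pz then (-1 : ℂ) else 1)) • (σ * ρ z) := by
          rw [hc, one_smul]
      _ = (if pz then (-1 : ℂ) else 1) • ((if pz then (-1 : ℂ) else 1) • (σ * ρ z)) := by
          rw [smul_smul]
      _ = (if pz then (-1 : ℂ) else 1) • (ρ z * σ) := by rw [← h]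
  have hEρ : ∀ (z : Matrix (Idx n) (Idx n) ℂ) (pz b : Bool), IsPn z → IsHomog z pz →
      (if b then σ else 1) * ρ z = bSign b pz • (ρ z * (if b then σ else 1)) := by
    intro z pz b h1 h2
    cases b
    · simp [bSign]
    · simp only [if_true]
      rw [hσρ' z pz h1 h2]
      congr 1
  have hEE : ∀ b c : Bool, ((if b then σ else 1) : Module.End ℂ M) * (if c then σ else 1) =
      (if Bool.xor b c then σ else 1) := by
    intro b c; cases b <;> cases c <;> simp [hσ]
  -- the homogeneous case
  have main : ∀ (z : Matrix (Idx n) (Idx n) ℂ) (pz : Bool), IsPn z → IsHomog z pz →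
      (TensorProduct.map (ρ z) (1 : Module.End ℂ (Idx n → ℂ))
        + TensorProduct.map (if pz then σ else 1) (Matrix.mulVecLin z)) *
      (∑ i, TensorProduct.map (ρ (xb i) * if pb i then σ else 1) (Matrix.mulVecLin (xs i))) =
      (∑ i, TensorProduct.map (ρ (xb i) * if pb i then σ else 1) (Matrix.mulVecLin (xs i))) *
      (TensorProduct.map (ρ z) (1 : Module.End ℂ (Idx n → ℂ))
        + TensorProduct.map (if pz then σ else 1) (Matrix.mulVecLin z)) := by
    intro z pz hz hhz
    have hcomm : ∀ (X : Matrix (Idx n) (Idx n) ℂ) (pa pc : Bool),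
        IsHomog X (Bool.xor pa pc) → IsHomog X (Bool.xor pc pa) := by
      intro X pa pc h; rwa [Bool.xor_comm]
    have hbrbPn : ∀ i, IsPn (z * xb i - bSign pz (pb i) • (xb i * z)) :=
      fun i => isPn_bracket hz (hxb i) hhz (hxbh i)
    have hbrbH : ∀ i, IsHomog (z * xb i - bSign pz (pb i) • (xb i * z)) (Bool.xor pz (pb i)) :=
      fun i => (hhz.mul (hxbh i)).sub (IsHomog.smul _ (hcomm _ _ _ ((hxbh i).mul hhz)))
    have hbrsG : ∀ i, IsGstar (z * xs i - bSign pz (pb i) • (xs i * z)) :=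
      fun i => isGstar_bracket hz (hxs i) hhz (hxsh i)
    have hbrsH : ∀ i, IsHomog (z * xs i - bSign pz (pb i) • (xs i * z)) (Bool.xor pz (pb i)) :=
      fun i => (hhz.mul (hxsh i)).sub (IsHomog.smul _ (hcomm _ _ _ ((hxsh i).mul hhz)))
    have hexp1 : ∀ i, z * xb i - bSign pz (pb i) • (xb i * z)
        = ∑ j, superStr (xs j * (z * xb i - bSign pz (pb i) • (xb i * z))) • xb j :=
      fun i => expand_pn xb xs hdual _ (hspan _ (hbrbPn i))
    have hexp2 : ∀ i, z * xs i - bSign pz (pb i) • (xs i * z)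
        = ∑ j, superStr ((z * xs i - bSign pz (pb i) • (xs i * z)) * xb j) • xs j :=
      fun i => expand_gstar xb xs hdual _ (hspan' _ (hbrsG i))
    have hρbr : ∀ i, ρ (z * xb i - bSign pz (pb i) • (xb i * z))
        = ρ z * ρ (xb i) - bSign pz (pb i) • (ρ (xb i) * ρ z) :=
      fun i => hrep z (xb i) pz (pb i) hz (hxb i) hhz (hxbh i)
    -- step 1 : commuting the first summand of the action past C_i
    have step1 : ∀ i, TensorProduct.map (ρ z) (1 : Module.End ℂ (Idx n → ℂ)) *
        TensorProduct.map (ρ (xb i) * if pb i then σ else 1) (Matrix.mulVecLin (xs i))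
        = TensorProduct.map (ρ (z * xb i - bSign pz (pb i) • (xb i * z)) *
            (if pb i then σ else 1)) (Matrix.mulVecLin (xs i))
          + TensorProduct.map (ρ (xb i) * if pb i then σ else 1) (Matrix.mulVecLin (xs i)) *
            TensorProduct.map (ρ z) (1 : Module.End ℂ (Idx n → ℂ)) := by
      intro i
      rw [← TensorProduct.map_mul, ← TensorProduct.map_mul, one_mul, mul_one]
      have e1 : (ρ (xb i) * (if pb i then σ else 1)) * ρ z
          = bSign pz (pb i) • (ρ (xb i) * (ρ z * (if pb i then σ else 1))) := by
        rw [mul_assoc, hEρ z pz (pb i) hz hhz, mul_smul_comm, bSign_comm]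
      rw [e1, ← TensorProduct.map_add_left]
      congr 1
      rw [hρbr i, sub_mul, smul_mul_assoc,
        mul_assoc (ρ (xb i)) (ρ z) ((if pb i then σ else 1) : Module.End ℂ M),
        sub_add_cancel, mul_assoc]
    -- step 2 : commuting the second summand of the action past C_i
    have step2 : ∀ i, TensorProduct.map ((if pz then σ else 1) : Module.End ℂ M)
        (Matrix.mulVecLin z) *
        TensorProduct.map (ρ (xb i) * if pb i then σ else 1) (Matrix.mulVecLin (xs i))
        = bSign pz (pb i) • TensorProduct.map
            (ρ (xb i) * ((if pz then σ else 1) * (if pb i then σ else 1)))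
            (Matrix.mulVecLin (z * xs i - bSign pz (pb i) • (xs i * z)))
          + TensorProduct.map (ρ (xb i) * if pb i then σ else 1) (Matrix.mulVecLin (xs i)) *
            TensorProduct.map ((if pz then σ else 1) : Module.End ℂ M) (Matrix.mulVecLin z) := by
      intro i
      rw [← TensorProduct.map_mul, ← TensorProduct.map_mul, mlv_mul, mlv_mul]
      have e2 : ((if pz then σ else 1) : Module.End ℂ M) * (ρ (xb i) * (if pb i then σ else 1))
          = bSign pz (pb i) • (ρ (xb i) * ((if pz then σ else 1) * (if pb i then σ else 1))) := by
        rw [← mul_assoc, hEρ (xb i) (pb i) pz (hxb i) (hxbh i), smul_mul_assoc, mul_assoc]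
      have e3 : (ρ (xb i) * (if pb i then σ else 1)) * ((if pz then σ else 1) : Module.End ℂ M)
          = ρ (xb i) * ((if pz then σ else 1) * (if pb i then σ else 1)) := by
        rw [mul_assoc, hEE, hEE, Bool.xor_comm]
      rw [e2, e3, TensorProduct.map_smul_left]
      rw [mlv_sub, mlv_smul, tmap_sub_right, TensorProduct.map_smul_right]
      have hfin : ∀ (X Y : Module.End ℂ (TensorProduct ℂ M (Idx n → ℂ))) (s : ℂ), s * s = 1 →
          s • X = s • (X - s • Y) + Y := by
        intro X Y s hs
        have h := smul_sub s X (s • Y)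
        rw [h, smul_smul, hs, one_smul, sub_add_cancel]
      exact hfin _ _ _ (bSign_sq pz (pb i))
    -- per-(i,j) vanishing
    have perterm : ∀ i j,
        superStr (xs j * (z * xb i - bSign pz (pb i) • (xb i * z))) •
          TensorProduct.map (ρ (xb j) * if pb i then σ else 1) (Matrix.mulVecLin (xs i))
        + (bSign pz (pb j) * superStr ((z * xs j - bSign pz (pb j) • (xs j * z)) * xb i)) •
          TensorProduct.map (ρ (xb j) * ((if pz then σ else 1) * (if pb j then σ else 1)))
            (Matrix.mulVecLin (xs i)) = 0 := by
      intro i j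
      by_cases hp : pb j = Bool.xor pz (pb i)
      · have hEEj : ((if pz then σ else 1) : Module.End ℂ M) * (if pb j then σ else 1)
            = (if pb i then σ else 1) := by
          rw [hEE]
          congr 1
          rw [hp, xor_cancel_left']
        rw [hEEj, ← add_smul]
        -- the invariance of the supertrace form kills the scalar
        have hS1 : superStr (xs j * (z * xb i - bSign pz (pb i) • (xb i * z)))
            = superStr (xs j * (z * xb i))
              - bSign pz (pb i) * superStr (xs j * (xb i * z)) := by
          rw [Matrix.mul_sub, Matrix.mul_smul, superStr_sub, superStr_smul]
        have hS2 : superStr ((z * xs j - bSign pz (pb j) • (xs j * z)) * xb i)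
            = superStr (z * (xs j * xb i))
              - bSign pz (pb j) * superStr (xs j * (z * xb i)) := by
          rw [Matrix.sub_mul, Matrix.smul_mul, superStr_sub, superStr_smul,
            mul_assoc, mul_assoc]
        have hS3 : superStr (z * (xs j * xb i))
            = bSign pz (Bool.xor (pb j) (pb i)) * superStr ((xs j * xb i) * z) :=
          superStr_mul_comm hhz ((hxsh j).mul (hxbh i))
        have hS3' : superStr (z * (xs j * xb i))
            = bSign pz (Bool.xor (pb j) (pb i)) * superStr (xs j * (xb i * z)) := by
          rw [hS3, mul_assoc]
        have hsj : bSign pz (pb j) * bSign pz (pb j) = 1 := bSign_sq _ _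
        have hsign : bSign pz (pb j) * bSign pz (Bool.xor (pb j) (pb i)) = bSign pz (pb i) := by
          rw [hp]
          cases pz <;> cases pb i <;> norm_num [bSign]
        have hscal : superStr (xs j * (z * xb i - bSign pz (pb i) • (xb i * z)))
            + bSign pz (pb j) * superStr ((z * xs j - bSign pz (pb j) • (xs j * z)) * xb i)
            = 0 := by
          rw [hS1, hS2, hS3']
          linear_combination superStr (xs j * (xb i * z)) * hsign
            - superStr (xs j * (z * xb i)) * hsj
        rw [hscal, zero_smul]
      · have hodd1 : Bool.xor (pb j) (Bool.xor pz (pb i)) = true := by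
          revert hp; cases pb j <;> cases pz <;> cases pb i <;> decide
        have hodd2 : Bool.xor (Bool.xor pz (pb j)) (pb i) = true := by
          revert hp; cases pb j <;> cases pz <;> cases pb i <;> decide
        have hc0 : superStr (xs j * (z * xb i - bSign pz (pb i) • (xb i * z))) = 0 := by
          apply superStr_odd
          rw [← hodd1]
          exact (hxsh j).mul (hbrbH i)
        have hd0 : superStr ((z * xs j - bSign pz (pb j) • (xs j * z)) * xb i) = 0 := by
          apply superStr_odd
          rw [← hodd2]
          exact (hbrsH j).mul (hxbh i)
        rw [hc0, hd0, zero_smul, mul_zero, zero_smul, add_zero]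
    -- expand D_i and F_i in the dual bases
    have hD : ∀ i, TensorProduct.map (ρ (z * xb i - bSign pz (pb i) • (xb i * z)) *
          (if pb i then σ else 1)) (Matrix.mulVecLin (xs i))
        = ∑ j, superStr (xs j * (z * xb i - bSign pz (pb i) • (xb i * z))) •
            TensorProduct.map (ρ (xb j) * if pb i then σ else 1) (Matrix.mulVecLin (xs i)) := by
      intro i
      conv_lhs => rw [hexp1 i]
      rw [map_sum, Finset.sum_mul, tmap_sum_left]
      refine Finset.sum_congr rfl fun j _ => ?_
      rw [_root_.map_smul ρ, smul_mul_assoc, TensorProduct.map_smul_left]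
    have hF : ∀ i, bSign pz (pb i) • TensorProduct.map
          (ρ (xb i) * ((if pz then σ else 1) * (if pb i then σ else 1)))
          (Matrix.mulVecLin (z * xs i - bSign pz (pb i) • (xs i * z)))
        = ∑ j, (bSign pz (pb i) * superStr ((z * xs i - bSign pz (pb i) • (xs i * z)) * xb j)) •
            TensorProduct.map (ρ (xb i) * ((if pz then σ else 1) * (if pb i then σ else 1)))
              (Matrix.mulVecLin (xs j)) := by
      intro i
      conv_lhs => rw [hexp2 i]
      rw [mlv_sum, tmap_sum_right, Finset.smul_sum]
      refine Finset.sum_congr rfl fun j _ => ?_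
      rw [mlv_smul, TensorProduct.map_smul_right, smul_smul]
    -- assemble
    rw [add_mul, mul_add, Finset.mul_sum, Finset.mul_sum, Finset.sum_mul, Finset.sum_mul]
    simp_rw [step1, step2]
    rw [Finset.sum_add_distrib, Finset.sum_add_distrib, add_add_add_comm]
    have hzero : (∑ i, TensorProduct.map (ρ (z * xb i - bSign pz (pb i) • (xb i * z)) *
          (if pb i then σ else 1)) (Matrix.mulVecLin (xs i)))
        + (∑ i, bSign pz (pb i) • TensorProduct.map
            (ρ (xb i) * ((if pz then σ else 1) * (if pb i then σ else 1)))
            (Matrix.mulVecLin (z * xs i - bSign pz (pb i) • (xs i * z)))) = 0 := by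
      simp_rw [hD, hF]
      rw [Finset.sum_comm (s := Finset.univ) (t := Finset.univ)
        (f := fun i j => (bSign pz (pb i) * superStr ((z * xs i - bSign pz (pb i) • (xs i * z)) * xb j)) •
            TensorProduct.map (ρ (xb i) * ((if pz then σ else 1) * (if pb i then σ else 1)))
              (Matrix.mulVecLin (xs j)))]
      rw [← Finset.sum_add_distrib]
      refine Finset.sum_eq_zero fun i _ => ?_
      rw [← Finset.sum_add_distrib]
      exact Finset.sum_eq_zero fun j _ => perterm i j
    rw [hzero, zero_add]
  -- reduction of a general element to its homogeneous parts
  intro x hx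
  rw [← Module.End.mul_eq_comp, ← Module.End.mul_eq_comp]
  have hT : TensorProduct.map (ρ x) (LinearMap.id : Module.End ℂ (Idx n → ℂ))
      + TensorProduct.map LinearMap.id (Matrix.mulVecLin (evenPart x))
      + TensorProduct.map σ (Matrix.mulVecLin (oddPart x))
      = (TensorProduct.map (ρ (evenPart x)) (1 : Module.End ℂ (Idx n → ℂ))
          + TensorProduct.map (if false then σ else 1) (Matrix.mulVecLin (evenPart x)))
        + (TensorProduct.map (ρ (oddPart x)) (1 : Module.End ℂ (Idx n → ℂ))
          + TensorProduct.map (if true then σ else 1) (Matrix.mulVecLin (oddPart x))) := by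
    have hA : TensorProduct.map (ρ x) (LinearMap.id : Module.End ℂ (Idx n → ℂ))
        = TensorProduct.map (ρ (evenPart x)) (1 : Module.End ℂ (Idx n → ℂ))
          + TensorProduct.map (ρ (oddPart x)) (1 : Module.End ℂ (Idx n → ℂ)) := by
      rw [← TensorProduct.map_add_left, ← map_add, evenPart_add_oddPart]
      rfl
    rw [hA]
    have h3 : (TensorProduct.map (LinearMap.id : Module.End ℂ M) (Matrix.mulVecLin (evenPart x)))
        = TensorProduct.map (if (false : Bool) then σ else 1) (Matrix.mulVecLin (evenPart x)) := rfl
    have h4 : (TensorProduct.map σ (Matrix.mulVecLin (oddPart x)))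
        = TensorProduct.map (if (true : Bool) then σ else 1) (Matrix.mulVecLin (oddPart x)) := rfl
    rw [h3, h4]
    abel
  rw [hT, add_mul, mul_add,
    main (evenPart x) false (isPn_evenPart hx) (isHomog_evenPart x),
    main (oddPart x) true (isPn_oddPart hx) (isHomog_oddPart x)]
end

section
/- Let V = ℂ^{n|n}, ε : V⊗V → V⊗V as above, and x ∈ p(n) homogeneous. Then for all basis vectors e_a, e_b: ε(x e_a ⊗ e_b + (−1)^{|x||e_a|} e_a ⊗ x e_b) = 0. -/
open Sum Matrix

/-- The basis vector `e_k` of `V`. -/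
noncomputable def stdVec {n : ℕ} (k : Idx n) : Idx n → ℂ := Pi.single k 1

/-- The column `X e_k` of a matrix `X ∈ gl(n|n)`. -/
def colVec {n : ℕ} (X : Matrix (Idx n) (Idx n) ℂ) (k : Idx n) : Idx n → ℂ :=
  fun a => X a k

/-- The pure tensor `u ⊗ v ∈ V ⊗ V` in coordinates. -/
def tens {n : ℕ} (u v : Idx n → ℂ) : VV n := fun p => u p.1 * v p.2

/-- The sign `(−1)^{|x||e_a|}` for `x` of parity `px`. -/
def hSign {n : ℕ} (px : Bool) (a : Idx n) : ℂ := if px && pIdx a then -1 else 1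


lemma pn_key {n : ℕ} (X : Matrix (Idx n) (Idx n) ℂ) (px : Bool)
    (hX : IsPn X) (hhom : IsHomog X px) (a b : Idx n) :
    X (bar b) a + hSign px a * X (bar a) b = 0 := by
  obtain ⟨hA, hU, hL⟩ := hX
  have hz : ∀ c d : Idx n, Bool.xor (pIdx c) (pIdx d) ≠ px → X c d = 0 := by
    intro c d h
    by_contra hc
    exact h (hhom c d hc)
  cases a with
  | inl s =>
    cases b with
    | inl t =>
      simp only [bar, hSign, pIdx, Sum.swap_inl, Sum.elim_inl, Bool.and_false, if_neg
        (by simp : ¬ (px && false) = true), one_mul]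
      rw [hL t s]; simp
    | inr t =>
      simp only [bar, hSign, pIdx, Sum.swap_inl, Sum.swap_inr, Sum.elim_inl,
        if_neg (by simp : ¬ (px && false) = true), one_mul]
      rw [hA s t]; simp
  | inr s =>
    cases b with
    | inl t =>
      simp only [bar, hSign, pIdx, Sum.swap_inl, Sum.swap_inr, Sum.elim_inr]
      rw [hA t s]
      cases px with
      | false => simp
      | true =>
        have := hz (inl s) (inl t) (by simp [pIdx])
        simp [this]
    | inr t =>
      simp only [bar, hSign, pIdx, Sum.swap_inr, Sum.elim_inr]
      rw [hU t s]
      cases px with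
      | false =>
        simp [hz (inl t) (inr s) (by simp [pIdx]), hz (inl s) (inr t) (by simp [pIdx])]
      | true => simp

/-- equation (A.2) of Lemma A.1: for every homogeneous
`x ∈ p(n)` of parity `px` and all basis vectors `e_a, e_b`:
`ε(x e_a ⊗ e_b + (−1)^{|x||e_a|} e_a ⊗ x e_b) = 0`. -/
theorem eps_kills_pn_action {n : ℕ}
    (X : Matrix (Idx n) (Idx n) ℂ) (px : Bool)
    (hX : IsPn X) (hhom : IsHomog X px) (a b : Idx n) :
    epsOp n (tens (colVec X a) (stdVec b) +
      hSign px a • tens (stdVec a) (colVec X b)) = 0 := by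
  funext p
  simp only [epsOp, LinearMap.pi_apply, LinearMap.smul_apply, LinearMap.coe_sum,
    Finset.sum_apply, LinearMap.proj_apply, Pi.add_apply, Pi.smul_apply, tens,
    colVec, smul_eq_mul, Pi.zero_apply]
  rcases eq_or_ne p.2 (bar p.1) with h | h
  · rw [if_pos h]
    have hsum : ∑ i : Idx n, (X i a * stdVec b (bar i) +
        hSign px a * (stdVec a i * X (bar i) b)) =
        X (bar b) a + hSign px a * X (bar a) b := by
      rw [Finset.sum_add_distrib]
      congr 1
      · rw [Finset.sum_eq_single (bar b)]
        · show X (bar b) a * stdVec b (bar (bar b)) = X (bar b) a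
          rw [stdVec, bar, Sum.swap_swap, Pi.single_eq_same, mul_one]
        · intro i _ hi
          have hne : bar i ≠ b := by
            intro hc
            apply hi
            rw [← hc, bar, Sum.swap_swap]
          rw [stdVec, Pi.single_eq_of_ne hne 1, mul_zero]
        · intro hmem; exact absurd (Finset.mem_univ _) hmem
      · rw [Finset.sum_eq_single a]
        · simp [stdVec]
        · intro i _ hi; rw [stdVec, Pi.single_eq_of_ne hi 1, zero_mul, mul_zero]
        · intro hmem; exact absurd (Finset.mem_univ _) hmem
    rw [hsum, pn_key X px hX hhom a b, mul_zero]
  · rw [if_neg h]; simp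
end

section
/- In any associative ℂ-algebra generated by elements s_a (1 ≤ a ≤ d−1) and y_j (1 ≤ j ≤ d) satisfying s_a² = 1, the braid relations, s_a y_i = y_i s_a for i ∉ {a, a+1}, and s_a y_a − y_{a+1} s_a = −1, y_a s_a − s_a y_{a+1} = −1 (i.e., the images under ε_a ↦ 0 of the defining relations (P.1), (P.2), (P.7)), the assignment s_a ↦ s_a, ε_a ↦ 0, y_j ↦ v_j defines an algebra homomorphism from the affine periplectic Brauer algebra P̂_d^- to the degenerate affine Hecke algebra H_d. -/
/-! The affine periplectic Brauer algebra `P̂_d⁻` is defined here as the free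
ℂ-algebra on generators `s_a, ε_a (0 ≤ a < d−1)` and `y_j (0 ≤ j < d)`
(0-based indexing of the strands), modulo the defining relations
(P.1)–(P.8).  The degenerate affine Hecke algebra is treated via its
relations: we show the assignment `s_a ↦ s_a, ε_a ↦ 0, y_j ↦ v_j` defines an
algebra homomorphism `P̂_d⁻ → H_d` whenever the targets satisfy the Hecke
relations. -/

/-- Generators of the affine periplectic Brauer algebra `P̂_d⁻`. -/
inductive PGen (d : ℕ)
  | S : Fin (d - 1) → PGen d
  | E : Fin (d - 1) → PGen d
  | Y : Fin d → PGen d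

namespace PGen

variable {d : ℕ}

/-- The inclusion `Fin (d−1) → Fin d` (index `a` of `s_a` as a `y`-index). -/
def lo (a : Fin (d - 1)) : Fin d := Fin.castLE (Nat.sub_le d 1) a

/-- The index `a + 1` as a `y`-index. -/
def hi (a : Fin (d - 1)) : Fin d := ⟨a.1 + 1, by omega⟩

open FreeAlgebra

/-- `s_a` as an element of the free algebra. -/
noncomputable def s (a : Fin (d - 1)) : FreeAlgebra ℂ (PGen d) := ι ℂ (S a)

/-- `ε_a` as an element of the free algebra. -/
noncomputable def e (a : Fin (d - 1)) : FreeAlgebra ℂ (PGen d) := ι ℂ (E a)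

/-- `y_j` as an element of the free algebra. -/
noncomputable def y (j : Fin d) : FreeAlgebra ℂ (PGen d) := ι ℂ (Y j)

/-- The defining relations (P.1)–(P.8) of `P̂_d⁻`. -/
inductive Rel : FreeAlgebra ℂ (PGen d) → FreeAlgebra ℂ (PGen d) → Prop
  | P1 (a : Fin (d - 1)) : Rel (s a * s a) 1
  | P2a (a b : Fin (d - 1)) (h : a.1 + 1 < b.1 ∨ b.1 + 1 < a.1) :
      Rel (s a * s b) (s b * s a)
  | P2b (c : Fin (d - 1)) (h : c.1 + 1 < d - 1) :
      Rel (s c * s ⟨c.1 + 1, h⟩ * s c) (s ⟨c.1 + 1, h⟩ * s c * s ⟨c.1 + 1, h⟩)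
  | P2c (a : Fin (d - 1)) (i : Fin d) (h : i ≠ lo a ∧ i ≠ hi a) :
      Rel (s a * y i) (y i * s a)
  | P3 (a : Fin (d - 1)) : Rel (e a * e a) 0
  | P4 (k : ℕ) (hk : 1 ≤ k) (h1 : 0 < d - 1) (h2 : 0 < d) :
      Rel (e ⟨0, h1⟩ * y ⟨0, h2⟩ ^ k * e ⟨0, h1⟩) 0
  | P5a1 (a b : Fin (d - 1)) (h : a.1 + 1 < b.1 ∨ b.1 + 1 < a.1) :
      Rel (s a * e b) (e b * s a)
  | P5a2 (a b : Fin (d - 1)) (h : a.1 + 1 < b.1 ∨ b.1 + 1 < a.1) :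
      Rel (e a * e b) (e b * e a)
  | P5b (a : Fin (d - 1)) (i : Fin d) (h : i ≠ lo a ∧ i ≠ hi a) :
      Rel (e a * y i) (y i * e a)
  | P5c (i j : Fin d) : Rel (y i * y j) (y j * y i)
  | P6a1 (a : Fin (d - 1)) : Rel (e a * s a) (-e a)
  | P6a2 (a : Fin (d - 1)) : Rel (s a * e a) (e a)
  | P6b1 (c : Fin (d - 1)) (h : c.1 + 1 < d - 1) :
      Rel (s c * e ⟨c.1 + 1, h⟩ * e c) (-(s ⟨c.1 + 1, h⟩ * e c))
  | P6b2 (c : Fin (d - 1)) (h : c.1 + 1 < d - 1) :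
      Rel (e c * e ⟨c.1 + 1, h⟩ * s c) (e c * s ⟨c.1 + 1, h⟩)
  | P6c1 (c : Fin (d - 1)) (h : c.1 + 1 < d - 1) :
      Rel (e ⟨c.1 + 1, h⟩ * e c * s ⟨c.1 + 1, h⟩) (-(e ⟨c.1 + 1, h⟩ * s c))
  | P6c2 (c : Fin (d - 1)) (h : c.1 + 1 < d - 1) :
      Rel (s ⟨c.1 + 1, h⟩ * e c * e ⟨c.1 + 1, h⟩) (s c * e ⟨c.1 + 1, h⟩)
  | P6d1 (c : Fin (d - 1)) (h : c.1 + 1 < d - 1) :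
      Rel (e ⟨c.1 + 1, h⟩ * e c * e ⟨c.1 + 1, h⟩) (-e ⟨c.1 + 1, h⟩)
  | P6d2 (c : Fin (d - 1)) (h : c.1 + 1 < d - 1) :
      Rel (e c * e ⟨c.1 + 1, h⟩ * e c) (-e c)
  | P7a (a : Fin (d - 1)) : Rel (s a * y (lo a) - y (hi a) * s a) (e a - 1)
  | P7b (a : Fin (d - 1)) : Rel (y (lo a) * s a - s a * y (hi a)) (-e a - 1)
  | P8a (a : Fin (d - 1)) : Rel (e a * (y (lo a) - y (hi a))) (e a)
  | P8b (a : Fin (d - 1)) : Rel ((y (lo a) - y (hi a)) * e a) (-e a)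

end PGen

/-- The affine periplectic Brauer algebra `P̂_d⁻`. -/
abbrev AffinePeriplecticBrauer (d : ℕ) := RingQuot (PGen.Rel (d := d))

/-- The generators of `P̂_d⁻`. -/
noncomputable def pGen {d : ℕ} (g : PGen d) : AffinePeriplecticBrauer d :=
  RingQuot.mkAlgHom ℂ (PGen.Rel (d := d)) (FreeAlgebra.ι ℂ g)

/-- if `A` is an associative ℂ-algebra with elements
`s_a (0 ≤ a < d−1)` and `v_j (0 ≤ j < d)` satisfying the relations of the
degenerate affine Hecke algebra `H_d` — `s_a² = 1`, the braid relations,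
commuting polynomial generators, `s_a v_i = v_i s_a` for `i ∉ {a, a+1}`,
`s_a v_a − v_{a+1} s_a = −1`, `s_a v_{a+1} − v_a s_a = 1` — then the
assignment `s_a ↦ s_a`, `ε_a ↦ 0`, `y_j ↦ v_j` defines an algebra
homomorphism `P̂_d⁻ → H_d`. -/
theorem affinePeriplecticBrauer_to_degenerateAffineHecke
    {d : ℕ} {A : Type*} [Ring A] [Algebra ℂ A]
    (s : Fin (d - 1) → A) (v : Fin d → A)
    (hs2 : ∀ a, s a * s a = 1)
    (hbr_far : ∀ a b, (a.1 + 1 < b.1 ∨ b.1 + 1 < a.1) → s a * s b = s b * s a)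
    (hbr : ∀ (c : Fin (d - 1)) (h : c.1 + 1 < d - 1),
      s c * s ⟨c.1 + 1, h⟩ * s c = s ⟨c.1 + 1, h⟩ * s c * s ⟨c.1 + 1, h⟩)
    (hv : ∀ i j, v i * v j = v j * v i)
    (hsv : ∀ (a : Fin (d - 1)) (i : Fin d), i ≠ PGen.lo a → i ≠ PGen.hi a →
      s a * v i = v i * s a)
    (h1 : ∀ a : Fin (d - 1), s a * v (PGen.lo a) - v (PGen.hi a) * s a = -1)
    (h2 : ∀ a : Fin (d - 1), s a * v (PGen.hi a) - v (PGen.lo a) * s a = 1) :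
    ∃ φ : AffinePeriplecticBrauer d →ₐ[ℂ] A,
      (∀ a, φ (pGen (PGen.S a)) = s a) ∧
      (∀ a, φ (pGen (PGen.E a)) = 0) ∧
      (∀ j, φ (pGen (PGen.Y j)) = v j) := by

  classical
  let g : PGen d → A := fun x => match x with
    | PGen.S a => s a
    | PGen.E _ => 0
    | PGen.Y j => v j
  let f : FreeAlgebra ℂ (PGen d) →ₐ[ℂ] A := FreeAlgebra.lift ℂ g
  have hfS : ∀ a, f (PGen.s a) = s a := fun a => FreeAlgebra.lift_ι_apply ..
  have hfE : ∀ a, f (PGen.e a) = 0 := fun a => FreeAlgebra.lift_ι_apply ..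
  have hfY : ∀ j, f (PGen.y j) = v j := fun j => FreeAlgebra.lift_ι_apply ..
  have hrel : ∀ ⦃x y : FreeAlgebra ℂ (PGen d)⦄, PGen.Rel x y → f x = f y := by
    intro x y h
    induction h with
    | P1 a => simp [hfS, hs2]
    | P2a a b h => simp [hfS, hbr_far a b h]
    | P2b c h => simp [hfS, hbr c h]
    | P2c a i h => simp [hfS, hfY, hsv a i h.1 h.2]
    | P3 a => simp [hfE]
    | P4 k hk h1' h2' => simp [hfE]
    | P5a1 a b h => simp [hfS, hfE]
    | P5a2 a b h => simp [hfE]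
    | P5b a i h => simp [hfE]
    | P5c i j => simp [hfY, hv i j]
    | P6a1 a => simp [hfE]
    | P6a2 a => simp [hfE]
    | P6b1 c h => simp [hfE]
    | P6b2 c h => simp [hfE]
    | P6c1 c h => simp [hfE]
    | P6c2 c h => simp [hfE]
    | P6d1 c h => simp [hfE]
    | P6d2 c h => simp [hfE]
    | P7a a => simp only [map_sub, map_mul, map_one, hfS, hfE, hfY]; rw [h1 a]; simp
    | P7b a =>
        simp only [map_sub, map_mul, map_neg, map_one, hfS, hfE, hfY]
        have hc : v (PGen.lo a) * s a - s a * v (PGen.hi a) = -1 := by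
          rw [← neg_sub, h2 a]
        rw [hc]; simp
    | P8a a => simp [hfE]
    | P8b a => simp [hfE]
  refine ⟨RingQuot.liftAlgHom ℂ ⟨f, hrel⟩, ?_, ?_, ?_⟩ <;>
    intro i <;>
    rw [pGen, RingQuot.liftAlgHom_mkAlgHom_apply] <;>
    [exact hfS i; exact hfE i; exact hfY i]
end

section
/- Let A be an associative algebra with elements ε_c, ε_{c+1}, s_c, s_{c+1} satisfying relations (P.1), (P.2)(b), (P.6)(a)–(c). Then (P.6)(d) follows: ε_{c+1} ε_c ε_{c+1} = −ε_{c+1} and ε_c ε_{c+1} ε_c = −ε_c. -/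
/-- in an associative algebra with elements
`s_c, s_{c+1}, ε_c, ε_{c+1}` satisfying relations (P.1), (P.2)(b) and
(P.6)(a)–(c) of the affine periplectic Brauer algebra, relation (P.6)(d)
follows: `ε_{c+1} ε_c ε_{c+1} = −ε_{c+1}` and `ε_c ε_{c+1} ε_c = −ε_c`. -/
theorem rel_P6d_follows {A : Type*} [Ring A] (s₁ s₂ ε₁ ε₂ : A)
    -- (P.1)
    (hP1a : s₁ * s₁ = 1) (hP1b : s₂ * s₂ = 1)
    -- (P.2)(b)
    (hP2b : s₁ * s₂ * s₁ = s₂ * s₁ * s₂)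
    -- (P.6)(a): ε_a s_a = −ε_a = s_a ε_a
    (hP6a₁ : ε₁ * s₁ = -ε₁) (hP6a₁' : s₁ * ε₁ = -ε₁)
    (hP6a₂ : ε₂ * s₂ = -ε₂) (hP6a₂' : s₂ * ε₂ = -ε₂)
    -- (P.6)(b)
    (hP6b₁ : s₁ * ε₂ * ε₁ = -(s₂ * ε₁)) (hP6b₂ : ε₁ * ε₂ * s₁ = ε₁ * s₂)
    -- (P.6)(c)
    (hP6c₁ : ε₂ * ε₁ * s₂ = -(ε₂ * s₁)) (hP6c₂ : s₂ * ε₁ * ε₂ = s₁ * ε₂) :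
    ε₂ * ε₁ * ε₂ = -ε₂ ∧ ε₁ * ε₂ * ε₁ = -ε₁ := by
  constructor
  · calc ε₂ * ε₁ * ε₂ = ε₂ * (ε₁ * ε₂ * s₁) * s₁ := by
          rw [show ε₂ * (ε₁ * ε₂ * s₁) * s₁ = ε₂ * ε₁ * ε₂ * (s₁ * s₁) by noncomm_ring,
            hP1a, mul_one]
      _ = ε₂ * (ε₁ * s₂) * s₁ := by rw [hP6b₂]
      _ = ε₂ * ε₁ * s₂ * s₁ := by noncomm_ring
      _ = -(ε₂ * s₁) * s₁ := by rw [hP6c₁]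
      _ = -(ε₂ * (s₁ * s₁)) := by noncomm_ring
      _ = -ε₂ := by rw [hP1a, mul_one]
  · calc ε₁ * ε₂ * ε₁ = s₂ * (s₂ * ε₁ * ε₂) * ε₁ := by
          rw [show s₂ * (s₂ * ε₁ * ε₂) * ε₁ = (s₂ * s₂) * (ε₁ * ε₂ * ε₁) by noncomm_ring,
            hP1b, one_mul]
      _ = s₂ * (s₁ * ε₂) * ε₁ := by rw [hP6c₂]
      _ = s₂ * (s₁ * ε₂ * ε₁) := by noncomm_ring
      _ = s₂ * -(s₂ * ε₁) := by rw [hP6b₁]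
      _ = -((s₂ * s₂) * ε₁) := by noncomm_ring
      _ = -ε₁ := by rw [hP1b, one_mul]
end
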